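/- arXiv:2306.10562 — 5 statements merged into one kernel-verified Lean document; each statement's English description precedes it below -/
import Mathlib

section
/- Let X be a real n×k matrix with XᵀX invertible, let Z be a real n-vector with Z^{⊥X} := (I − P_X)Z ≠ 0, and let W = [X Z] be the n×(k+1) matrix obtained by appending Z as a column to X (so W has full column rank and WᵀW is invertible). Then the projection matrix of W decomposes as P_W = P_X + P_{Z^{⊥X}}, where P_{Z^{⊥X}} = Z^{⊥X}(Z^{⊥X})ᵀ / ((Z^{⊥X})ᵀ Z^{⊥X}). -/
open Matrix

/-- Projection matrix onto the column space of `A`: `P_A = A (Aᵀ A)⁻¹ Aᵀ`. -/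
noncomputable def Pmat {n m : ℕ} (A : Matrix (Fin n) (Fin m) ℝ) : Matrix (Fin n) (Fin n) ℝ :=
  A * (Aᵀ * A)⁻¹ * Aᵀ

/-- Projection matrix onto the span of a single column vector `z`, written with
scalar division: `P_z = z zᵀ / (zᵀ z)`. -/
noncomputable def Pvec {n : ℕ} (z : Matrix (Fin n) (Fin 1) ℝ) : Matrix (Fin n) (Fin n) ℝ :=
  ((zᵀ * z) 0 0)⁻¹ • (z * zᵀ)

/-- The deviation-from-means matrix `M⁰ = I - (1/n) ι ιᵀ`. -/
noncomputable def M0 (n : ℕ) : Matrix (Fin n) (Fin n) ℝ :=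
  (1 : Matrix (Fin n) (Fin n) ℝ) - (n : ℝ)⁻¹ • Matrix.of (fun _ _ => (1 : ℝ))

/-- The augmented matrix `W = [X Z]` obtained by appending the column `Z` to `X`. -/
noncomputable def appendCol {n k : ℕ} (X : Matrix (Fin n) (Fin k) ℝ)
    (Z : Matrix (Fin n) (Fin 1) ℝ) : Matrix (Fin n) (Fin (k + 1)) ℝ :=
  Matrix.of fun i => Fin.snoc (X i) (Z i 0)

/-- Total R² of a regression of `Y` on regressors with projection matrix `P`:
`R² = (Yᵀ P M⁰ P Y)/(Yᵀ M⁰ Y)`. -/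
noncomputable def totalR2 {n : ℕ} (Y : Matrix (Fin n) (Fin 1) ℝ)
    (P : Matrix (Fin n) (Fin n) ℝ) : ℝ :=
  (Yᵀ * P * M0 n * P * Y) 0 0 / (Yᵀ * M0 n * Y) 0 0

lemma appendCol_eq {n k : ℕ} (X : Matrix (Fin n) (Fin k) ℝ) (Z : Matrix (Fin n) (Fin 1) ℝ) :
    appendCol X Z = (fromCols X Z).submatrix id ⇑(finSumFinEquiv (m := k) (n := 1)).symm := by
  ext i j
  refine Fin.lastCases ?_ (fun j => ?_) j
  · simp [appendCol, fromCols, finSumFinEquiv_symm_last]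
  · have h : Fin.snoc (n := k) (α := fun _ => ℝ) (X i) (Z i 0) (Fin.castAdd 1 j) = X i j := by
      rw [show Fin.castAdd 1 j = j.castSucc from rfl, Fin.snoc_castSucc]
    have e1 : (finSumFinEquiv (m := k) (n := 1)).symm j.castSucc = Sum.inl j :=
      finSumFinEquiv_symm_apply_castAdd j
    simp [appendCol, fromCols, e1, h]

lemma oneByOne (B : Matrix (Fin 1) (Fin 1) ℝ) : B = B 0 0 • 1 := by
  ext i j
  fin_cases i <;> fin_cases j <;> simp

/-- Decomposition of the projection matrix: `P_W = P_X + P_{Z^{⊥X}}`. -/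
theorem proj_decomp {n k : ℕ} (X : Matrix (Fin n) (Fin k) ℝ)
    (Z : Matrix (Fin n) (Fin 1) ℝ)
    (hX : IsUnit (Xᵀ * X))
    (hZperp : Z - Pmat X * Z ≠ 0) :
    Pmat (appendCol X Z) = Pmat X + Pvec (Z - Pmat X * Z) := by
  set A : Matrix (Fin k) (Fin k) ℝ := (Xᵀ * X)⁻¹ with hAdef
  have hdet : IsUnit (Xᵀ * X).det := (Matrix.isUnit_iff_isUnit_det _).mp hX
  have hA1 : Xᵀ * X * A = 1 := Matrix.mul_nonsing_inv _ hdet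
  have hA2 : A * (Xᵀ * X) = 1 := Matrix.nonsing_inv_mul _ hdet
  have hAT : Aᵀ = A := by
    rw [hAdef, Matrix.transpose_nonsing_inv, Matrix.transpose_mul, Matrix.transpose_transpose]
  -- the residual M and the scalar d
  set M : Matrix (Fin n) (Fin 1) ℝ := Z - Pmat X * Z with hMdef
  set d : ℝ := (Mᵀ * M) 0 0 with hddef
  have hPmat : Pmat X = X * A * Xᵀ := rfl
  have hPM : Pmat X * M = 0 := by
    have hPP : Pmat X * Pmat X = Pmat X := by
      rw [hPmat]
      calc X * A * Xᵀ * (X * A * Xᵀ) = X * (A * (Xᵀ * X)) * (A * Xᵀ) := by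
            simp only [Matrix.mul_assoc]
        _ = X * A * Xᵀ := by rw [hA2]; simp only [Matrix.mul_one, Matrix.mul_assoc]
    rw [hMdef, Matrix.mul_sub, ← Matrix.mul_assoc, hPP, sub_self]
  have hMTM : Mᵀ * M = Zᵀ * M := by
    have : Mᵀ = Zᵀ - Zᵀ * Pmat X := by
      rw [hMdef, Matrix.transpose_sub, Matrix.transpose_mul]
      congr 1
      rw [hPmat]
      simp only [Matrix.transpose_mul, Matrix.transpose_transpose, hAT, Matrix.mul_assoc]
    rw [this, Matrix.sub_mul, Matrix.mul_assoc, hPM, Matrix.mul_zero, sub_zero]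
  have hd : d ≠ 0 := by
    intro h0
    apply hZperp
    have hsum : ∑ i : Fin n, M i 0 * M i 0 = 0 := by
      have : (Mᵀ * M) 0 0 = ∑ i : Fin n, M i 0 * M i 0 := by
        simp [Matrix.mul_apply, Matrix.transpose_apply]
      rw [← this, ← hddef, h0]
    ext i j
    have hi := (Finset.sum_eq_zero_iff_of_nonneg (fun i _ => mul_self_nonneg (M i 0))).mp hsum i
      (Finset.mem_univ i)
    have : M i 0 = 0 := by nlinarith [hi]
    simpa [Subsingleton.elim j 0] using this
  have hd1 : d⁻¹ * d = 1 := inv_mul_cancel₀ hd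
  -- M as flattened expression
  have hMflat : M = Z - X * A * Xᵀ * Z := by rw [hMdef, hPmat]
  -- key scalar identity: ZᵀXAXᵀZ = ZᵀZ - d•1
  have hZPZ : Zᵀ * X * A * Xᵀ * Z = Zᵀ * Z - d • 1 := by
    have h1 : Zᵀ * M = d • 1 := by rw [← hMTM]; exact oneByOne _
    have h2 : Zᵀ * M = Zᵀ * Z - Zᵀ * X * A * Xᵀ * Z := by
      rw [hMflat, Matrix.mul_sub]
      simp only [Matrix.mul_assoc]
    rw [h2] at h1
    linear_combination (norm := (simp only [Matrix.mul_assoc]; abel)) -h1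
  -- the inverse of the block Gram matrix
  set C : Matrix (Fin k ⊕ Fin 1) (Fin k ⊕ Fin 1) ℝ :=
    fromBlocks (A + d⁻¹ • (A * (Xᵀ * Z) * (Zᵀ * X) * A)) (-(d⁻¹ • (A * (Xᵀ * Z))))
      (-(d⁻¹ • ((Zᵀ * X) * A))) (d⁻¹ • 1) with hCdef
  set G : Matrix (Fin k ⊕ Fin 1) (Fin k ⊕ Fin 1) ℝ :=
    fromBlocks (Xᵀ * X) (Xᵀ * Z) (Zᵀ * X) (Zᵀ * Z) with hGdef
  have h11 : Xᵀ * X * (A + d⁻¹ • (A * (Xᵀ * Z) * (Zᵀ * X) * A))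
      + Xᵀ * Z * (-(d⁻¹ • ((Zᵀ * X) * A))) = 1 := by
    simp only [Matrix.mul_add, Matrix.mul_smul, Matrix.mul_neg, ← Matrix.mul_assoc, hA1,
      Matrix.one_mul]
    module
  have h12 : Xᵀ * X * (-(d⁻¹ • (A * (Xᵀ * Z)))) + Xᵀ * Z * (d⁻¹ • (1 : Matrix (Fin 1) (Fin 1) ℝ)) = 0 := by
    simp only [Matrix.mul_smul, Matrix.mul_neg, Matrix.mul_one, ← Matrix.mul_assoc, hA1,
      Matrix.one_mul]
    module
  have h21 : Zᵀ * X * (A + d⁻¹ • (A * (Xᵀ * Z) * (Zᵀ * X) * A))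
      + Zᵀ * Z * (-(d⁻¹ • ((Zᵀ * X) * A))) = 0 := by
    simp only [Matrix.mul_add, Matrix.mul_smul, Matrix.mul_neg, ← Matrix.mul_assoc]
    rw [hZPZ]
    simp only [Matrix.sub_mul, Matrix.smul_mul, Matrix.one_mul, smul_sub, smul_smul, hd1,
      one_smul]
    module
  have h22 : Zᵀ * X * (-(d⁻¹ • (A * (Xᵀ * Z)))) + Zᵀ * Z * (d⁻¹ • (1 : Matrix (Fin 1) (Fin 1) ℝ)) = 1 := by
    simp only [Matrix.mul_smul, Matrix.mul_neg, Matrix.mul_one, ← Matrix.mul_assoc]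
    rw [hZPZ]
    rw [smul_sub, smul_smul, hd1, one_smul]
    module
  have hGC : G * C = 1 := by
    rw [hGdef, hCdef, Matrix.fromBlocks_multiply, h11, h12, h21, h22, Matrix.fromBlocks_one]
  -- reduce Pmat (appendCol X Z) to the block form
  set W : Matrix (Fin n) (Fin k ⊕ Fin 1) ℝ := fromCols X Z with hWdef
  have hWT : Wᵀ * W = G := by
    rw [hWdef, hGdef, transpose_fromCols, fromRows_mul_fromCols]
  have hGinv : (Wᵀ * W)⁻¹ = C := by rw [hWT]; exact Matrix.inv_eq_right_inv hGC
  have hred : Pmat (appendCol X Z) = W * C * Wᵀ := by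
    set e := (finSumFinEquiv (m := k) (n := 1)) with hedef
    have s1 : (Wᵀ.submatrix ⇑e.symm id) * (W.submatrix id ⇑e.symm)
        = (Wᵀ * W).submatrix ⇑e.symm ⇑e.symm :=
      (Matrix.submatrix_mul Wᵀ W ⇑e.symm id ⇑e.symm Function.bijective_id).symm
    have s2 : ((Wᵀ * W).submatrix ⇑e.symm ⇑e.symm)⁻¹
        = ((Wᵀ * W)⁻¹).submatrix ⇑e.symm ⇑e.symm :=
      Matrix.inv_submatrix_equiv _ e.symm e.symm
    have s3 : (W.submatrix id ⇑e.symm) * (((Wᵀ * W)⁻¹).submatrix ⇑e.symm ⇑e.symm)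
        = (W * (Wᵀ * W)⁻¹).submatrix id ⇑e.symm :=
      Matrix.submatrix_mul_equiv W (Wᵀ * W)⁻¹ id e.symm ⇑e.symm
    have s4 : ((W * (Wᵀ * W)⁻¹).submatrix id ⇑e.symm) * (Wᵀ.submatrix ⇑e.symm id)
        = (W * (Wᵀ * W)⁻¹ * Wᵀ).submatrix id id :=
      Matrix.submatrix_mul_equiv (W * (Wᵀ * W)⁻¹) Wᵀ id e.symm id
    rw [Pmat, appendCol_eq, Matrix.transpose_submatrix, ← hedef, ← hWdef, s1, s2, s3, s4,
      Matrix.submatrix_id_id, hGinv]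
  -- final computation
  rw [hred, hWdef, hCdef, fromCols_mul_fromBlocks, transpose_fromCols,
    fromCols_mul_fromRows]
  have hPvec : Pvec M = d⁻¹ • (M * Mᵀ) := rfl
  rw [hPvec, hPmat, hMflat]
  simp only [Matrix.transpose_sub, Matrix.transpose_mul, Matrix.transpose_transpose, hAT]
  simp only [Matrix.mul_add, Matrix.add_mul, Matrix.mul_sub, Matrix.sub_mul, Matrix.mul_smul,
    Matrix.smul_mul, Matrix.mul_neg, Matrix.neg_mul, Matrix.mul_one, smul_sub, smul_add,
    ← Matrix.mul_assoc]
  module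
end

section
/- Let X be a real n×k matrix with XᵀX invertible such that the all-ones vector ι lies in the column space of X, let Z be a real n-vector with Z^{⊥X} := (I − P_X)Z ≠ 0, and let W = [X Z]. Then P_W M⁰ P_W = P_X M⁰ P_X + P_{Z^{⊥X}} M⁰ P_{Z^{⊥X}}, where M⁰ = I − (1/n)ιιᵀ and P_{Z^{⊥X}} = Z^{⊥X}(Z^{⊥X})ᵀ / ((Z^{⊥X})ᵀ Z^{⊥X}). -/
/-!
With `z = Z - P_X Z` orthogonal to the columns of `X`, the column space of `W = [X Z]` is the
orthogonal sum of that of `X` and the line spanned by `z`, so `P_W = P_X + P_z`. As `ι` lies in the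
column space of `X`, `z` has mean zero, so `M⁰ P_z = P_z`; together with `P_X P_z = 0` this kills
the cross terms of `(P_X + P_z) M⁰ (P_X + P_z)`.
-/

open Matrix

section Projection

variable {n m p : ℕ}

theorem Pmat_transpose (A : Matrix (Fin n) (Fin m) ℝ) : (Pmat A)ᵀ = Pmat A := by
  simp only [Pmat, transpose_mul, transpose_nonsing_inv, transpose_transpose, Matrix.mul_assoc]

theorem mul_Pmat_of_mul_eq {A : Matrix (Fin n) (Fin m) ℝ} {B : Matrix (Fin p) (Fin n) ℝ}
    {C : Matrix (Fin p) (Fin m) ℝ} (h : B * A = C) :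
    B * Pmat A = C * (Aᵀ * A)⁻¹ * Aᵀ := by
  rw [Pmat, ← Matrix.mul_assoc, ← Matrix.mul_assoc, h]

theorem mul_Pmat_of_mul_eq_self {A : Matrix (Fin n) (Fin m) ℝ} {B : Matrix (Fin n) (Fin n) ℝ}
    (h : B * A = A) : B * Pmat A = Pmat A :=
  mul_Pmat_of_mul_eq h

theorem mul_Pmat_of_mul_eq_zero {A : Matrix (Fin n) (Fin m) ℝ} {B : Matrix (Fin p) (Fin n) ℝ}
    (h : B * A = 0) : B * Pmat A = 0 := by
  rw [mul_Pmat_of_mul_eq h, Matrix.zero_mul, Matrix.zero_mul]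

theorem Pmat_mul_of_transpose_mul_eq_zero {A : Matrix (Fin n) (Fin m) ℝ}
    {B : Matrix (Fin n) (Fin p) ℝ} (h : Aᵀ * B = 0) : Pmat A * B = 0 := by
  rw [Pmat, Matrix.mul_assoc, h, Matrix.mul_zero]

theorem Pmat_mul_self {A : Matrix (Fin n) (Fin m) ℝ} (hA : IsUnit (Aᵀ * A)) : Pmat A * A = A := by
  rw [Pmat, Matrix.mul_assoc, Matrix.mul_assoc, nonsing_inv_mul _ ((isUnit_iff_isUnit_det _).mp hA),
    Matrix.mul_one]

theorem transpose_mul_sub_Pmat_mul {A : Matrix (Fin n) (Fin m) ℝ} (hA : IsUnit (Aᵀ * A))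
    (B : Matrix (Fin n) (Fin p) ℝ) : Aᵀ * (B - Pmat A * B) = 0 := by
  have hAP : Aᵀ * Pmat A = Aᵀ := by
    rw [← Pmat_transpose, ← transpose_mul, Pmat_mul_self hA]
  rw [Matrix.mul_sub, ← Matrix.mul_assoc, hAP, sub_self]

/-- `P_A` is the only symmetric matrix that fixes the columns of `A` and has range inside theirs. -/
theorem eq_Pmat_of_mul_eq_self {A : Matrix (Fin n) (Fin m) ℝ} {Q : Matrix (Fin n) (Fin n) ℝ}
    (hQ : Qᵀ = Q) (hQA : Q * A = A) (hPQ : Pmat A * Q = Q) : Q = Pmat A := by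
  have hQP : Q * Pmat A = Pmat A := mul_Pmat_of_mul_eq_self hQA
  have hPQ' : Pmat A * Q = Pmat A := by
    simpa only [transpose_mul, hQ, Pmat_transpose] using congrArg transpose hQP
  rw [← hPQ, hPQ']

theorem isUnit_transpose_mul_self_iff {A : Matrix (Fin n) (Fin m) ℝ} :
    IsUnit (Aᵀ * A) ↔ Function.Injective A.mulVec := by
  constructor
  · intro h
    have hcomp : (Aᵀ * A).mulVec = Aᵀ.mulVec ∘ A.mulVec :=
      funext fun v => (mulVec_mulVec v _ _).symm
    exact Function.Injective.of_comp (f := Aᵀ.mulVec) (hcomp ▸ mulVec_injective_iff_isUnit.mpr h)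
  · intro h
    simpa [conjTranspose_eq_transpose_of_trivial] using (PosDef.conjTranspose_mul_self A h).isUnit

theorem isUnit_transpose_mul_self_of_ne_zero {z : Matrix (Fin n) (Fin 1) ℝ} (hz : z ≠ 0) :
    IsUnit (zᵀ * z) := by
  have hzz : zᵀ * z ≠ 0 := by
    simpa [conjTranspose_eq_transpose_of_trivial] using
      (conjTranspose_mul_self_eq_zero (A := z)).not.mpr hz
  rw [isUnit_iff_isUnit_det, det_unique, isUnit_iff_ne_zero]
  exact fun h => hzz <| ext fun i j => by
    simpa [Subsingleton.elim i default, Subsingleton.elim j default] using h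

theorem Pvec_eq_Pmat (z : Matrix (Fin n) (Fin 1) ℝ) : Pvec z = Pmat z := by
  ext i j
  simp only [Pvec, Pmat, Matrix.mul_apply, transpose_apply, Matrix.smul_apply, Finset.univ_unique,
    Fin.default_eq_zero, Finset.sum_singleton, smul_eq_mul, inv_subsingleton, Ring.inverse_eq_inv',
    diagonal_apply_eq]
  ring

end Projection

section AppendCol

variable {n k p : ℕ}

theorem mul_appendCol (Q : Matrix (Fin p) (Fin n) ℝ) (X : Matrix (Fin n) (Fin k) ℝ)
    (Z : Matrix (Fin n) (Fin 1) ℝ) : Q * appendCol X Z = appendCol (Q * X) (Q * Z) := by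
  ext i j
  refine Fin.lastCases ?_ (fun j => ?_) j <;> simp [appendCol, Matrix.mul_apply]

theorem appendCol_inj {X X' : Matrix (Fin n) (Fin k) ℝ} {Z Z' : Matrix (Fin n) (Fin 1) ℝ} :
    appendCol X Z = appendCol X' Z' ↔ X = X' ∧ Z = Z' := by
  refine ⟨fun h => ⟨ext fun i j => ?_, ext fun i j => ?_⟩, fun ⟨hX, hZ⟩ => hX ▸ hZ ▸ rfl⟩
  · simpa [appendCol] using congrFun (congrFun h i) j.castSucc
  · simpa [appendCol, Subsingleton.elim j 0] using congrFun (congrFun h i) (Fin.last k)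

theorem mul_appendCol_eq_self_iff {Q : Matrix (Fin n) (Fin n) ℝ} {X : Matrix (Fin n) (Fin k) ℝ}
    {Z : Matrix (Fin n) (Fin 1) ℝ} : Q * appendCol X Z = appendCol X Z ↔ Q * X = X ∧ Q * Z = Z := by
  rw [mul_appendCol, appendCol_inj]

theorem appendCol_mulVec (X : Matrix (Fin n) (Fin k) ℝ) (Z : Matrix (Fin n) (Fin 1) ℝ)
    (v : Fin (k + 1) → ℝ) :
    appendCol X Z *ᵥ v = X *ᵥ Fin.init v + Z *ᵥ fun _ => v (Fin.last k) := by
  ext i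
  simp [appendCol, mulVec, dotProduct, Fin.sum_univ_castSucc, Fin.init]

end AppendCol

section Residual

variable {n k : ℕ} {X : Matrix (Fin n) (Fin k) ℝ} {Z : Matrix (Fin n) (Fin 1) ℝ}

theorem residual_transpose_mul (hX : IsUnit (Xᵀ * X)) : (Z - Pmat X * Z)ᵀ * X = 0 := by
  simpa only [transpose_mul, transpose_transpose, transpose_zero] using
    congrArg transpose (transpose_mul_sub_Pmat_mul hX Z)

theorem residual_transpose_mul_self (hX : IsUnit (Xᵀ * X)) :
    (Z - Pmat X * Z)ᵀ * Z = (Z - Pmat X * Z)ᵀ * (Z - Pmat X * Z) := by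
  rw [Matrix.mul_sub (Z - Pmat X * Z)ᵀ, ← Matrix.mul_assoc,
    mul_Pmat_of_mul_eq_zero (residual_transpose_mul hX), Matrix.zero_mul, sub_zero]

/-- Pairing with the residual `Z - P_X Z` isolates the last coordinate. -/
theorem mulVec_injective_appendCol (hX : IsUnit (Xᵀ * X)) (hz : Z - Pmat X * Z ≠ 0) :
    Function.Injective (appendCol X Z).mulVec := by
  set z := Z - Pmat X * Z
  have hzW : zᵀ * appendCol X Z = appendCol 0 (zᵀ * z) := by
    rw [mul_appendCol, residual_transpose_mul hX, residual_transpose_mul_self hX]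
  refine (injective_iff_map_eq_zero (mulVecLin (appendCol X Z))).mpr fun v hv => ?_
  rw [mulVecLin_apply] at hv
  have hlast : (fun _ : Fin 1 => v (Fin.last k)) = 0 := by
    have h := congrArg (zᵀ *ᵥ ·) hv
    rw [mulVec_mulVec, hzW, appendCol_mulVec, zero_mulVec, zero_add, mulVec_zero] at h
    exact mulVec_injective_iff_isUnit.mpr (isUnit_transpose_mul_self_of_ne_zero hz)
      (h.trans (mulVec_zero _).symm)
  have hinit : Fin.init v = 0 := by
    rw [appendCol_mulVec, hlast, mulVec_zero, add_zero] at hv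
    exact isUnit_transpose_mul_self_iff.mp hX (hv.trans (mulVec_zero _).symm)
  rw [← Fin.snoc_init_self v, hinit, congrFun hlast 0]
  ext j
  refine Fin.lastCases ?_ (fun j => ?_) j <;> simp

theorem Pmat_appendCol (hX : IsUnit (Xᵀ * X)) (hz : Z - Pmat X * Z ≠ 0) :
    Pmat (appendCol X Z) = Pmat X + Pmat (Z - Pmat X * Z) := by
  set z := Z - Pmat X * Z with hz_def
  have hPzX : Pmat z * X = 0 := Pmat_mul_of_transpose_mul_eq_zero (residual_transpose_mul hX)
  have hPzz : Pmat z * z = z := Pmat_mul_self (isUnit_transpose_mul_self_of_ne_zero hz)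
  have hPzPX : Pmat z * Pmat X = 0 := mul_Pmat_of_mul_eq_zero hPzX
  obtain ⟨hWX, hWZ⟩ := mul_appendCol_eq_self_iff.mp
    (Pmat_mul_self (isUnit_transpose_mul_self_iff.mpr (mulVec_injective_appendCol hX hz)))
  have hWPX : Pmat (appendCol X Z) * Pmat X = Pmat X := mul_Pmat_of_mul_eq_self hWX
  have hWz : Pmat (appendCol X Z) * z = z := by
    rw [hz_def, Matrix.mul_sub, hWZ, ← Matrix.mul_assoc, hWPX]
  refine (eq_Pmat_of_mul_eq_self ?_ (mul_appendCol_eq_self_iff.mpr ⟨?_, ?_⟩) ?_).symm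
  · rw [transpose_add, Pmat_transpose, Pmat_transpose]
  · rw [Matrix.add_mul, Pmat_mul_self hX, hPzX, add_zero]
  · have hZ : Z = z + Pmat X * Z := (sub_add_cancel Z _).symm
    rw [Matrix.add_mul, hZ, Matrix.mul_add (Pmat z), hPzz, ← Matrix.mul_assoc, hPzPX,
      Matrix.zero_mul, add_zero, ← hZ, hz_def, add_sub_cancel]
  · rw [Matrix.mul_add, hWPX, mul_Pmat_of_mul_eq_self hWz]

end Residual

theorem M0_transpose (n : ℕ) : (M0 n)ᵀ = M0 n := by
  simp only [M0, transpose_sub, transpose_one, transpose_smul]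
  rfl

theorem M0_mul_of_transpose_mul_eq_zero {n k p : ℕ} {X : Matrix (Fin n) (Fin k) ℝ}
    (hι : ∃ v : Fin k → ℝ, X *ᵥ v = fun _ => 1) {B : Matrix (Fin n) (Fin p) ℝ}
    (hXB : Xᵀ * B = 0) : M0 n * B = B := by
  obtain ⟨v, hv⟩ := hι
  have hsum : (fun _ => (1 : ℝ)) ᵥ* B = 0 := by
    rw [← hv, ← vecMul_transpose, vecMul_vecMul, hXB, vecMul_zero]
  have hJB : (Matrix.of fun _ _ => (1 : ℝ) : Matrix (Fin n) (Fin n) ℝ) * B = 0 := by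
    ext i j
    simpa [Matrix.mul_apply, vecMul, dotProduct] using congrFun hsum j
  rw [M0, Matrix.sub_mul, Matrix.one_mul, Matrix.smul_mul, hJB, smul_zero, sub_zero]

theorem add_mul_mul_add_of_mul_eq_zero {m α : Type*} [Fintype m] [CommRing α]
    {P Q M : Matrix m m α} (hP : Pᵀ = P) (hQ : Qᵀ = Q) (hM : Mᵀ = M) (hMQ : M * Q = Q)
    (hPQ : P * Q = 0) : (P + Q) * M * (P + Q) = P * M * P + Q * M * Q := by
  have hQM : Q * M = Q := by
    simpa only [transpose_mul, hQ, hM] using congrArg transpose hMQ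
  have hQP : Q * P = 0 := by
    simpa only [transpose_mul, hQ, hP, transpose_zero] using congrArg transpose hPQ
  rw [Matrix.add_mul, Matrix.add_mul, Matrix.mul_add, Matrix.mul_add, Matrix.mul_assoc P M Q, hMQ,
    hPQ, hQM, hQP]
  abel

/-- `P_W M⁰ P_W = P_X M⁰ P_X + P_{Z^{⊥X}} M⁰ P_{Z^{⊥X}}`. -/
theorem proj_M0_decomp {n k : ℕ} (X : Matrix (Fin n) (Fin k) ℝ)
    (Z : Matrix (Fin n) (Fin 1) ℝ)
    (hX : IsUnit (Xᵀ * X))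
    (hiota : ∃ v : Fin k → ℝ, X *ᵥ v = fun _ => (1 : ℝ))
    (hZperp : Z - Pmat X * Z ≠ 0) :
    Pmat (appendCol X Z) * M0 n * Pmat (appendCol X Z) =
      Pmat X * M0 n * Pmat X +
        Pvec (Z - Pmat X * Z) * M0 n * Pvec (Z - Pmat X * Z) := by
  have hXz : Xᵀ * (Z - Pmat X * Z) = 0 := transpose_mul_sub_Pmat_mul hX Z
  rw [Pmat_appendCol hX hZperp, Pvec_eq_Pmat]
  refine add_mul_mul_add_of_mul_eq_zero (Pmat_transpose _) (Pmat_transpose _) (M0_transpose n) ?_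
    (mul_Pmat_of_mul_eq_zero (Pmat_mul_of_transpose_mul_eq_zero hXz))
  exact mul_Pmat_of_mul_eq_self (M0_mul_of_transpose_mul_eq_zero hiota hXz)
end

section
/- Let X be a real n×k matrix with XᵀX invertible such that the all-ones vector ι lies in the column space of X, let Z be a nonzero real n-vector orthogonal to the columns of X (i.e., XᵀZ = 0), let W = [X Z], and let Y be a real n-vector with Yᵀ M⁰ Y ≠ 0. Then R²_{Y∼X+Z} = R²_{Y∼X} + R²_{Y∼Z}. -/
open Matrix

/-- If `Z ⊥ X`, then `R²_{Y∼X+Z} = R²_{Y∼X} + R²_{Y∼Z}`. -/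
theorem R2_decomp_ortho {n k : ℕ} (X : Matrix (Fin n) (Fin k) ℝ)
    (Z Y : Matrix (Fin n) (Fin 1) ℝ)
    (hX : IsUnit (Xᵀ * X))
    (hiota : ∃ v : Fin k → ℝ, X *ᵥ v = fun _ => (1 : ℝ))
    (hZ : Z ≠ 0)
    (hZX : Xᵀ * Z = 0)
    (hY : (Yᵀ * M0 n * Y) 0 0 ≠ 0) :
    totalR2 Y (Pmat (appendCol X Z)) =
      totalR2 Y (Pmat X) + totalR2 Y (Pmat Z) := by
  -- Z is a unit as a 1×1 Gram matrix
  have hZZpos : (0:ℝ) < (Zᵀ * Z) 0 0 := by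
    obtain ⟨i, j, hij⟩ : ∃ i j, Z i j ≠ 0 := by
      by_contra h
      push_neg at h
      exact hZ (by ext i j; simp [h])
    have hj : j = 0 := Subsingleton.elim _ _
    subst hj
    have : (Zᵀ * Z) 0 0 = ∑ i, Z i 0 * Z i 0 := by simp [mul_apply]
    rw [this]
    exact Finset.sum_pos' (fun i _ => mul_self_nonneg _)
      ⟨i, Finset.mem_univ i, mul_self_pos.mpr hij⟩
  have hZunit : IsUnit (Zᵀ * Z) := by
    rw [Matrix.isUnit_iff_isUnit_det, Matrix.det_fin_one]
    exact (IsUnit.mk0 _ (ne_of_gt hZZpos))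
  -- appendCol as a column-reindexed fromCols
  set e : Fin k ⊕ Fin 1 ≃ Fin (k+1) := finSumFinEquiv
  have hW : appendCol X Z = (fromCols X Z).submatrix id ⇑e.symm := by
    ext i j
    refine Fin.lastCases ?_ ?_ j
    · simp [appendCol, e, fromCols]
    · intro a
      have he : e.symm a.castSucc = Sum.inl a := finSumFinEquiv_symm_apply_castAdd a
      simp [appendCol, fromCols, he]
  -- compute Pmat of appendCol
  have hGram : (fromCols X Z)ᵀ * fromCols X Z
      = fromBlocks (Xᵀ * X) 0 0 (Zᵀ * Z) := by
    rw [transpose_fromCols, fromRows_mul_fromCols, hZX]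
    congr 1
    have := congrArg transpose hZX
    simpa using this
  have hPW : Pmat (appendCol X Z) = Pmat X + Pmat Z := by
    have h1 : (appendCol X Z)ᵀ = (fromCols X Z)ᵀ.submatrix ⇑e.symm id := by
      rw [hW, transpose_submatrix]
    have h2 : (appendCol X Z)ᵀ * appendCol X Z
        = ((fromCols X Z)ᵀ * fromCols X Z).submatrix ⇑e.symm ⇑e.symm := by
      rw [h1, hW, ← Equiv.coe_refl (α := Fin n), submatrix_mul_equiv]
    have h3 : ((appendCol X Z)ᵀ * appendCol X Z)⁻¹
        = ((fromCols X Z)ᵀ * fromCols X Z)⁻¹.submatrix ⇑e.symm ⇑e.symm := by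
      rw [h2, Matrix.inv_submatrix_equiv]
    have hinv : ((fromCols X Z)ᵀ * fromCols X Z)⁻¹
        = fromBlocks (Xᵀ * X)⁻¹ 0 0 (Zᵀ * Z)⁻¹ := by
      rw [hGram, inv_fromBlocks_zero₂₁_of_isUnit_iff _ _ _ (by simp [hX, hZunit])]
      simp
    calc Pmat (appendCol X Z)
        = appendCol X Z * ((appendCol X Z)ᵀ * appendCol X Z)⁻¹ * (appendCol X Z)ᵀ := rfl
      _ = (fromCols X Z * ((fromCols X Z)ᵀ * fromCols X Z)⁻¹ *
            (fromCols X Z)ᵀ).submatrix id id := by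
          rw [h3, hW, transpose_submatrix, submatrix_mul_equiv, submatrix_mul_equiv]
      _ = fromCols X Z * (fromBlocks (Xᵀ * X)⁻¹ 0 0 (Zᵀ * Z)⁻¹) * (fromCols X Z)ᵀ := by
          rw [hinv, submatrix_id_id]
      _ = Pmat X + Pmat Z := by
          rw [transpose_fromCols, fromCols_mul_fromBlocks, fromCols_mul_fromRows]
          simp [Pmat, Matrix.mul_assoc]
  -- ι ⊥ Z
  have hsum : ∑ j, Z j 0 = 0 := by
    obtain ⟨v, hv⟩ := hiota
    have h1 : ∀ j, Z j 0 = (∑ a, X j a * v a) * Z j 0 := by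
      intro j
      have h2 : (X *ᵥ v) j = (1:ℝ) := by rw [hv]
      rw [show (∑ a, X j a * v a) = (X *ᵥ v) j from rfl, h2, one_mul]
    calc ∑ j, Z j 0 = ∑ j, ∑ a, X j a * v a * Z j 0 := by
          simp_rw [← Finset.sum_mul]; exact Finset.sum_congr rfl fun j _ => h1 j
      _ = ∑ a, ∑ j, X j a * v a * Z j 0 := Finset.sum_comm
      _ = ∑ a : Fin k, v a * ((Xᵀ * Z) a 0) := by
          refine Finset.sum_congr rfl fun a _ => ?_
          rw [mul_apply, Finset.mul_sum]
          exact Finset.sum_congr rfl fun j _ => by simp [transpose_apply]; ring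
      _ = (0:ℝ) := by rw [hZX]; simp
  have hJZ : ((Matrix.of fun _ _ => (1:ℝ)) : Matrix (Fin n) (Fin n) ℝ) * Z = (0 : Matrix (Fin n) (Fin 1) ℝ) := by
    ext i j
    have : j = 0 := Subsingleton.elim _ _
    subst this
    simp [mul_apply, hsum]
  have hZJ : Zᵀ * ((Matrix.of fun _ _ => (1:ℝ)) : Matrix (Fin n) (Fin n) ℝ) = (0 : Matrix (Fin 1) (Fin n) ℝ) := by
    ext i j
    have : i = 0 := Subsingleton.elim _ _
    subst this
    simp [mul_apply, hsum]
  have hM0Z : M0 n * Z = Z := by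
    rw [M0, Matrix.sub_mul, Matrix.one_mul, Matrix.smul_mul, hJZ, smul_zero, sub_zero]
  have hZM0 : Zᵀ * M0 n = Zᵀ := by
    rw [M0, Matrix.mul_sub, Matrix.mul_one, Matrix.mul_smul, hZJ, smul_zero, sub_zero]
  have hM0PZ : M0 n * Pmat Z = Pmat Z := by
    rw [Pmat, ← Matrix.mul_assoc, ← Matrix.mul_assoc, hM0Z]
  have hPZM0 : Pmat Z * M0 n = Pmat Z := by
    rw [Pmat, Matrix.mul_assoc, hZM0]
  have hPXPZ : Pmat X * Pmat Z = 0 := by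
    rw [Pmat, Pmat]
    rw [Matrix.mul_assoc (X * (Xᵀ * X)⁻¹), ← Matrix.mul_assoc Xᵀ, ← Matrix.mul_assoc Xᵀ, hZX]
    simp
  have hPZPX : Pmat Z * Pmat X = 0 := by
    have hZXt : Zᵀ * X = 0 := by
      have := congrArg transpose hZX
      simpa using this
    rw [Pmat, Pmat]
    rw [Matrix.mul_assoc (Z * (Zᵀ * Z)⁻¹), ← Matrix.mul_assoc Zᵀ, ← Matrix.mul_assoc Zᵀ, hZXt]
    simp
  -- cross terms vanish
  have hcross1 : Pmat X * M0 n * Pmat Z = 0 := by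
    rw [Matrix.mul_assoc, hM0PZ, hPXPZ]
  have hcross2 : Pmat Z * M0 n * Pmat X = 0 := by
    rw [hPZM0, hPZPX]
  have c1 : Yᵀ * Pmat X * M0 n * Pmat Z * Y = 0 := by
    calc Yᵀ * Pmat X * M0 n * Pmat Z * Y
        = Yᵀ * (Pmat X * M0 n * Pmat Z) * Y := by simp only [Matrix.mul_assoc]
      _ = 0 := by rw [hcross1, Matrix.mul_zero, Matrix.zero_mul]
  have c2 : Yᵀ * Pmat Z * M0 n * Pmat X * Y = 0 := by
    calc Yᵀ * Pmat Z * M0 n * Pmat X * Y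
        = Yᵀ * (Pmat Z * M0 n * Pmat X) * Y := by simp only [Matrix.mul_assoc]
      _ = 0 := by rw [hcross2, Matrix.mul_zero, Matrix.zero_mul]
  have expandmat : Yᵀ * (Pmat X + Pmat Z) * M0 n * (Pmat X + Pmat Z) * Y
      = Yᵀ * Pmat X * M0 n * Pmat X * Y + Yᵀ * Pmat Z * M0 n * Pmat Z * Y := by
    simp only [Matrix.mul_add, Matrix.add_mul]
    rw [c1, c2]
    abel
  unfold totalR2
  rw [hPW, ← add_div, expandmat, Matrix.add_apply]
end

section
/- Let X be a real n×k matrix with XᵀX invertible such that the all-ones vector ι lies in the column space of X, let Z be a real n-vector with Z^{⊥X} := (I − P_X)Z ≠ 0, let W = [X Z] and W' = [X Z^{⊥X}], and let Y be a real n-vector with Yᵀ M⁰ Y ≠ 0 and R²_{Y∼X} < 1. Then the partial R² of Y and Z given X equals the partial R² of Y and Z^{⊥X} given X: (R²_{Y∼X+Z} − R²_{Y∼X})/(1 − R²_{Y∼X}) = (R²_{Y∼X+Z^{⊥X}} − R²_{Y∼X})/(1 − R²_{Y∼X}), i.e., R²_{Y∼X+Z} = R²_{Y∼X+Z^{⊥X}}.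 -/
open Matrix

/-! `P_W` depends only on the column space of `W`: `P_{WT} = P_W` for every invertible `T`.
Replacing `Z` by `Z^{⊥X} = Z - X (XᵀX)⁻¹XᵀZ` is an invertible column operation on `[X Z]`, so
both regressions share the same projection matrix and hence the same R². -/

lemma Pmat_mul_of_isUnit_det {n m : ℕ} (W : Matrix (Fin n) (Fin m) ℝ)
    {T : Matrix (Fin m) (Fin m) ℝ} (hT : IsUnit T.det) : Pmat (W * T) = Pmat W := by
  have hGram : (W * T)ᵀ * (W * T) = Tᵀ * (Wᵀ * W) * T := by
    simp only [transpose_mul, Matrix.mul_assoc]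
  have hTT : T * T⁻¹ = 1 := mul_nonsing_inv T hT
  have hTtTt : Tᵀ⁻¹ * Tᵀ = 1 := nonsing_inv_mul Tᵀ (by rwa [det_transpose])
  calc Pmat (W * T)
      = W * (T * T⁻¹) * (Wᵀ * W)⁻¹ * (Tᵀ⁻¹ * Tᵀ) * Wᵀ := by
        rw [Pmat, hGram, Matrix.mul_inv_rev, Matrix.mul_inv_rev, transpose_mul]
        simp only [Matrix.mul_assoc]
    _ = Pmat W := by rw [hTT, hTtTt, Matrix.mul_one, Matrix.mul_one, Pmat]

lemma isUnit_det_one_sub_vecMulVec {m R : Type*} [Fintype m] [DecidableEq m] [CommRing R]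
    {v w : m → R} (hvw : w ⬝ᵥ v = 0) :
    IsUnit (1 - vecMulVec v w).det := by
  have hsq : vecMulVec v w * vecMulVec v w = 0 := by
    rw [vecMulVec_mul_vecMulVec, hvw, zero_smul, vecMulVec_zero]
  refine isUnit_det_of_right_inverse (B := 1 + vecMulVec v w) ?_
  rw [Matrix.sub_mul, Matrix.one_mul, Matrix.mul_add, Matrix.mul_one, hsq]
  abel

lemma appendCol_mulVec_snoc_zero {n k : ℕ} (X : Matrix (Fin n) (Fin k) ℝ)
    (Z : Matrix (Fin n) (Fin 1) ℝ) (v : Fin k → ℝ) :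
    appendCol X Z *ᵥ Fin.snoc v 0 = X *ᵥ v := by
  ext i
  simp [mulVec, dotProduct, Fin.sum_univ_castSucc, appendCol]

lemma appendCol_sub_mul {n k : ℕ} (X : Matrix (Fin n) (Fin k) ℝ)
    (Z : Matrix (Fin n) (Fin 1) ℝ) (b : Matrix (Fin k) (Fin 1) ℝ) :
    appendCol X (Z - X * b) = appendCol X Z *
      (1 - vecMulVec (Fin.snoc (fun j => b j 0) 0) (Pi.single (Fin.last k) 1)) := by
  ext i j
  rw [Matrix.mul_sub, Matrix.mul_one, mul_vecMulVec, appendCol_mulVec_snoc_zero,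
    Matrix.sub_apply, vecMulVec_apply]
  induction j using Fin.lastCases with
  | last => simp [appendCol, mulVec, dotProduct, Matrix.mul_apply]
  | cast j => simp [appendCol, (Fin.castSucc_lt_last j).ne]

lemma Pmat_appendCol_sub_mul {n k : ℕ} (X : Matrix (Fin n) (Fin k) ℝ)
    (Z : Matrix (Fin n) (Fin 1) ℝ) (b : Matrix (Fin k) (Fin 1) ℝ) :
    Pmat (appendCol X (Z - X * b)) = Pmat (appendCol X Z) := by
  rw [appendCol_sub_mul, Pmat_mul_of_isUnit_det]
  apply isUnit_det_one_sub_vecMulVec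
  simp

theorem partialR2_resid_general {n k : ℕ} (X : Matrix (Fin n) (Fin k) ℝ)
    (Z Y : Matrix (Fin n) (Fin 1) ℝ) :
    (totalR2 Y (Pmat (appendCol X Z)) - totalR2 Y (Pmat X)) /
        (1 - totalR2 Y (Pmat X)) =
      (totalR2 Y (Pmat (appendCol X (Z - Pmat X * Z))) - totalR2 Y (Pmat X)) /
        (1 - totalR2 Y (Pmat X)) ∧
    totalR2 Y (Pmat (appendCol X Z)) =
      totalR2 Y (Pmat (appendCol X (Z - Pmat X * Z))) := by
  have hP : Pmat (appendCol X (Z - Pmat X * Z)) = Pmat (appendCol X Z) := by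
    rw [show Pmat X * Z = X * ((Xᵀ * X)⁻¹ * Xᵀ * Z) by simp only [Pmat, Matrix.mul_assoc],
      Pmat_appendCol_sub_mul]
  rw [hP]
  exact ⟨rfl, rfl⟩

/-- The partial R² of `Y` and `Z` given `X` equals the partial R² of `Y` and
`Z^{⊥X}` given `X`; equivalently `R²_{Y∼X+Z} = R²_{Y∼X+Z^{⊥X}}`. -/
theorem partialR2_resid {n k : ℕ} (X : Matrix (Fin n) (Fin k) ℝ)
    (Z Y : Matrix (Fin n) (Fin 1) ℝ)
    (hX : IsUnit (Xᵀ * X))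
    (hiota : ∃ v : Fin k → ℝ, X *ᵥ v = fun _ => (1 : ℝ))
    (hZperp : Z - Pmat X * Z ≠ 0)
    (hY : (Yᵀ * M0 n * Y) 0 0 ≠ 0)
    (hR2 : totalR2 Y (Pmat X) < 1) :
    (totalR2 Y (Pmat (appendCol X Z)) - totalR2 Y (Pmat X)) /
        (1 - totalR2 Y (Pmat X)) =
      (totalR2 Y (Pmat (appendCol X (Z - Pmat X * Z))) - totalR2 Y (Pmat X)) /
        (1 - totalR2 Y (Pmat X)) ∧
    totalR2 Y (Pmat (appendCol X Z)) =
      totalR2 Y (Pmat (appendCol X (Z - Pmat X * Z))) :=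
  partialR2_resid_general X Z Y
end

section
/- Let r_DZ, r_DX, r_ZX, and k be real numbers with 0 < r_DX² < 1, r_ZX² < 1, k ≥ 0, and |r_DZ| = √k · |r_DX|. Define the recursive partial correlation R = (r_DZ − r_DX · r_ZX) / (√(1 − r_DX²) · √(1 − r_ZX²)). Then R² ≥ α · f², where α = (√k − |r_ZX|)² / (1 − r_ZX²) ≥ 0 and f² = r_DX² / (1 − r_DX²). (In the paper's notation, with r_DZ = R_{D∼Z|X₋ⱼ}, r_DX = R_{D∼Xⱼ|X₋ⱼ}, r_ZX = R_{Z∼Xⱼ|X₋ⱼ}, and k = k_D = R²_{D∼Z|X₋ⱼ}/R²_{D∼Xⱼ|X₋ⱼ}, this gives the lower bound R²_{D∼Z|X} ≥ α_D f²_{D∼Xⱼ|X₋ⱼ}; the identical statement with D replaced by Y gives R²_{Y∼Z|X} ≥ α_Y f²_{Y∼Xⱼ|X₋ⱼ}.) -/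
/-!
By the reverse triangle inequality,
`|r_DZ - r_DX r_ZX| ≥ |r_DZ| - |r_DX| |r_ZX| = |r_DX| (√k - |r_ZX|)`; squaring and dividing by
`(1 - r_DX²)(1 - r_ZX²)` gives the bound.
-/

lemma sq_abs_sub_abs_le_sq_sub {α : Type*} [Ring α] [LinearOrder α] [IsStrictOrderedRing α]
    (a b : α) : (|a| - |b|) ^ 2 ≤ (a - b) ^ 2 :=
  sq_le_sq.mpr (abs_abs_sub_abs_le_abs_sub a b)

lemma sq_mul_sub_abs_le_sq_sub {α : Type*} [CommRing α] [LinearOrder α] [IsStrictOrderedRing α]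
    {a b c s : α} (habs : |a| = s * |b|) :
    b ^ 2 * (s - |c|) ^ 2 ≤ (a - b * c) ^ 2 :=
  calc b ^ 2 * (s - |c|) ^ 2 = (|a| - |b * c|) ^ 2 := by
        rw [habs, abs_mul, ← sq_abs b]; ring
    _ ≤ (a - b * c) ^ 2 := sq_abs_sub_abs_le_sq_sub a (b * c)

lemma div_sqrt_mul_sqrt_sq {x p q : ℝ} (hp : 0 ≤ p) (hq : 0 ≤ q) :
    (x / (Real.sqrt p * Real.sqrt q)) ^ 2 = x ^ 2 / (p * q) := by
  rw [div_pow, mul_pow, Real.sq_sqrt hp, Real.sq_sqrt hq]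

theorem partial_corr_lower_bound_general (rDZ rDX rZX k : ℝ)
    (h2 : rDX ^ 2 < 1) (h3 : rZX ^ 2 < 1)
    (habs : |rDZ| = Real.sqrt k * |rDX|) :
    0 ≤ (Real.sqrt k - |rZX|) ^ 2 / (1 - rZX ^ 2) ∧
    ((rDZ - rDX * rZX) /
        (Real.sqrt (1 - rDX ^ 2) * Real.sqrt (1 - rZX ^ 2))) ^ 2 ≥
      ((Real.sqrt k - |rZX|) ^ 2 / (1 - rZX ^ 2)) *
        (rDX ^ 2 / (1 - rDX ^ 2)) := by
  have hD : 0 ≤ 1 - rDX ^ 2 := by linarith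
  have hZ : 0 ≤ 1 - rZX ^ 2 := by linarith
  refine ⟨div_nonneg (sq_nonneg _) hZ, ?_⟩
  rw [div_sqrt_mul_sqrt_sq hD hZ, div_mul_div_comm, mul_comm (_ ^ 2), mul_comm (1 - rZX ^ 2)]
  exact div_le_div_of_nonneg_right (sq_mul_sub_abs_le_sq_sub habs) (mul_nonneg hD hZ)

/-- Lower bound for the squared recursive partial correlation:
`R² ≥ α f²` with `α = (√k − |r_ZX|)²/(1 − r_ZX²) ≥ 0` and
`f² = r_DX²/(1 − r_DX²)`. -/
theorem partial_corr_lower_bound (rDZ rDX rZX k : ℝ)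
    (h1 : 0 < rDX ^ 2) (h2 : rDX ^ 2 < 1) (h3 : rZX ^ 2 < 1)
    (hk : 0 ≤ k)
    (habs : |rDZ| = Real.sqrt k * |rDX|) :
    0 ≤ (Real.sqrt k - |rZX|) ^ 2 / (1 - rZX ^ 2) ∧
    ((rDZ - rDX * rZX) /
        (Real.sqrt (1 - rDX ^ 2) * Real.sqrt (1 - rZX ^ 2))) ^ 2 ≥
      ((Real.sqrt k - |rZX|) ^ 2 / (1 - rZX ^ 2)) *
        (rDX ^ 2 / (1 - rDX ^ 2)) :=
  partial_corr_lower_bound_general rDZ rDX rZX k h2 h3 habs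
end
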